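/- There exists a universal constant c ∈ (0,∞) with the following property. Assume p ∈ [1,2), and fix q ∈ (p,2] and r, s ∈ [1,∞). Suppose (Y,‖·‖_Y) is a Banach space with S_q(Y) < ∞, and suppose f : 𝔽₂^m → Y satisfies ((1/4^m)·∑_{(x,y)∈𝔽₂^m×𝔽₂^m} ‖f(x)−f(y)‖_Y^r)^{1/r} = ((1/4^m)·∑_{(x,y)∈𝔽₂^m×𝔽₂^m} ‖x−y‖_{ℓ_p}^s)^{1/s}, where points of 𝔽₂^m are identified with {0,1}^m ⊂ ℝ^m and ‖x−y‖_{ℓ_p} = (∑_{i=1}^m |x_i−y_i|^p)^{1/p}. Then there exist x ∈ 𝔽₂^m and i ∈ {1,…,m} such that ‖f(x)−f(x+e_i)‖_Y ≥ c·m^{1/p − 1/q} / (r^{1/q} + S_q(Y)). -/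

import Mathlib

open scoped ENNReal

def IsSmoothConst (Y : Type*) [NormedAddCommGroup Y] (q S : ℝ) : Prop :=
  1 ≤ S ∧ ∀ x y : Y, (‖x + y‖ ^ q + ‖x - y‖ ^ q) / 2 ≤ ‖x‖ ^ q + S ^ q * ‖y‖ ^ q

noncomputable def smoothConst (Y : Type*) [NormedAddCommGroup Y] (q : ℝ) : ℝ :=
  sInf {S : ℝ | IsSmoothConst Y q S}

/-!
Let `L` be the longest edge of `f`, and put `ρ = max r 2`. Comparing the two norms `‖x ± y‖`
with `cosh` shows that a `q`-smooth space satisfies the `ρ`-th power inequality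
`(‖x+y‖^ρ + ‖x-y‖^ρ)/2 ≤ (‖x‖^q + K‖y‖^q)^{ρ/q}` with `K = S^q + 3ρ`. Splitting off one
coordinate of the cube and replacing `f` by the midpoints of its edges in that direction,
this inequality together with Minkowski's inequality in `ℓ_{ρ/q}` gives, by induction on the
dimension, `(𝔼‖f x - f y‖^ρ)^{1/ρ} ≤ (K m)^{1/q} L`. On the other hand, since `x ↦ x + 1` is
antipodal, the `ℓ_p` side of the normalisation is at least `m^{1/p}/4`. By the power mean
inequality the two bounds combine to `m^{1/p} ≲ (r^{1/q} + S) m^{1/q} L`, and `S_q(Y)` is itself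
a smoothness constant because the defining condition is closed in `S`.
-/

open Real Finset

lemma sq_rpow_div_two {z : ℝ} (hz : 0 ≤ z) (q : ℝ) : (z ^ 2) ^ (q / 2) = z ^ q := by
  rw [← rpow_natCast, ← rpow_mul hz]; congr 1; push_cast; ring

lemma exp_le_one_add_two_mul {x : ℝ} (h0 : 0 ≤ x) (h1 : x ≤ 1) : exp x ≤ 1 + 2 * x := by
  simpa [mul_comm, one_add_one_eq_two] using exp_bound' h0 h1 one_pos

lemma one_add_rpow_add_one_sub_rpow_le {ρ t : ℝ} (hρ : 2 ≤ ρ) (ht0 : 0 ≤ t) (ht1 : t ≤ 1) :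
    ((1 + t) ^ ρ + (1 - t) ^ ρ) / 2 ≤ (1 + 3 * ρ * t ^ 2) ^ (ρ / 2) := by
  have hρ0 : 0 ≤ ρ := by linarith
  rcases le_total 1 (ρ * t ^ 2) with hbig | hsmall
  · have hle (a : ℝ) (ha : 0 ≤ a) (ha2 : a ≤ 2) : a ^ ρ ≤ (1 + 3 * ρ * t ^ 2) ^ (ρ / 2) := by
      rw [← sq_rpow_div_two ha]
      exact rpow_le_rpow (by positivity) (by nlinarith) (by positivity)
    linarith [hle (1 + t) (by linarith) (by linarith), hle (1 - t) (by linarith) (by linarith)]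
  · have hplus : (1 + t) ^ ρ ≤ exp (ρ * t) := by
      calc (1 + t) ^ ρ ≤ exp t ^ ρ :=
            rpow_le_rpow (by linarith) (by linarith [add_one_le_exp t]) hρ0
        _ = exp (ρ * t) := by rw [← exp_mul, mul_comm]
    have hminus : (1 - t) ^ ρ ≤ exp (-(ρ * t)) := by
      calc (1 - t) ^ ρ ≤ exp (-t) ^ ρ := rpow_le_rpow (by linarith) (one_sub_le_exp_neg t) hρ0
        _ = exp (-(ρ * t)) := by rw [← exp_mul]; ring_nf
    have hexp : exp (ρ * t ^ 2) ≤ 1 + 3 * ρ * t ^ 2 := by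
      linarith [exp_le_one_add_two_mul (by positivity) hsmall, mul_nonneg hρ0 (sq_nonneg t)]
    calc ((1 + t) ^ ρ + (1 - t) ^ ρ) / 2 ≤ cosh (ρ * t) := by rw [cosh_eq]; linarith
      _ ≤ exp ((ρ * t) ^ 2 / 2) := cosh_le_exp_half_sq _
      _ = exp (ρ * t ^ 2) ^ (ρ / 2) := by rw [← exp_mul]; ring_nf
      _ ≤ (1 + 3 * ρ * t ^ 2) ^ (ρ / 2) := rpow_le_rpow (exp_pos _).le hexp (by positivity)

lemma rpow_add_rpow_div_two_le {ρ a b : ℝ} (hρ : 2 ≤ ρ) (ha : 0 ≤ a) (hb : 0 ≤ b) :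
    (a ^ ρ + b ^ ρ) / 2 ≤ (((a + b) / 2) ^ 2 + 3 * ρ * ((a - b) / 2) ^ 2) ^ (ρ / 2) := by
  wlog hba : b ≤ a generalizing a b
  · convert this hb ha (le_of_not_ge hba) using 2 <;> ring
  have hρ0 : 0 < ρ := by linarith
  rcases (show 0 ≤ a + b by positivity).eq_or_lt with hab | hab
  · obtain ⟨rfl, rfl⟩ : a = 0 ∧ b = 0 := by constructor <;> linarith
    simp [zero_rpow hρ0.ne', rpow_nonneg le_rfl]
  set c := (a + b) / 2 with hc_def
  set t := (a - b) / 2 / c with ht_def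
  have hc : 0 < c := by positivity
  have hct : (a - b) / 2 = c * t := by rw [ht_def]; field_simp
  have ha' : a = c * (1 + t) := by linarith
  have hb' : b = c * (1 - t) := by linarith
  have ht0 : 0 ≤ t := by positivity
  have ht1 : t ≤ 1 := by rw [ht_def, div_le_one hc]; linarith
  calc (a ^ ρ + b ^ ρ) / 2 = c ^ ρ * (((1 + t) ^ ρ + (1 - t) ^ ρ) / 2) := by
        rw [ha', hb', mul_rpow hc.le (by linarith), mul_rpow hc.le (by linarith)]; ring
    _ ≤ c ^ ρ * (1 + 3 * ρ * t ^ 2) ^ (ρ / 2) := by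
        gcongr
        exact one_add_rpow_add_one_sub_rpow_le hρ ht0 ht1
    _ = (c ^ 2 + 3 * ρ * ((a - b) / 2) ^ 2) ^ (ρ / 2) := by
        rw [← sq_rpow_div_two hc.le ρ, ← mul_rpow (by positivity) (by positivity), hct]; ring_nf

lemma IsSmoothConst.norm_add_rpow_add_norm_sub_rpow_le {Y : Type*} [NormedAddCommGroup Y]
    {q S : ℝ} (hS : IsSmoothConst Y q S) (hq1 : 1 ≤ q) (hq2 : q ≤ 2) {ρ : ℝ} (hρ : 2 ≤ ρ)
    (x y : Y) :
    (‖x + y‖ ^ ρ + ‖x - y‖ ^ ρ) / 2 ≤ (‖x‖ ^ q + (S ^ q + 3 * ρ) * ‖y‖ ^ q) ^ (ρ / q) := by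
  have hq0 : 0 < q := by linarith
  have hmid : ((‖x + y‖ + ‖x - y‖) / 2) ^ q ≤ ‖x‖ ^ q + S ^ q * ‖y‖ ^ q := by
    refine le_trans ?_ (hS.2 x y)
    have := (convexOn_rpow hq1).2 (Set.mem_Ici.2 (norm_nonneg (x + y)))
      (Set.mem_Ici.2 (norm_nonneg (x - y))) (by norm_num : (0:ℝ) ≤ 1 / 2)
      (by norm_num : (0:ℝ) ≤ 1 / 2) (by norm_num)
    simp only [smul_eq_mul] at this
    convert this using 1 <;> ring_nf
  have hdiff : |(‖x + y‖ - ‖x - y‖) / 2| ≤ ‖y‖ := by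
    have h := (abs_norm_sub_norm_le (x + y) (x - y)).trans
      ((congrArg norm (by abel : x + y - (x - y) = y + y)).le.trans (norm_add_le y y))
    rw [abs_div, abs_two]; linarith
  set a := ‖x + y‖
  set b := ‖x - y‖
  set E := ((a + b) / 2) ^ 2 + 3 * ρ * ((a - b) / 2) ^ 2
  have hE : E ^ (q / 2) ≤ ‖x‖ ^ q + (S ^ q + 3 * ρ) * ‖y‖ ^ q := by
    have h3ρ : (3 * ρ) ^ (q / 2) ≤ 3 * ρ := by
      simpa using rpow_le_rpow_of_exponent_le (by linarith : (1:ℝ) ≤ 3 * ρ)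
        (by linarith : q / 2 ≤ 1)
    have hy : |(a - b) / 2| ^ q ≤ ‖y‖ ^ q := rpow_le_rpow (abs_nonneg _) hdiff hq0.le
    calc E ^ (q / 2) ≤ (((a + b) / 2) ^ 2) ^ (q / 2) + (3 * ρ * ((a - b) / 2) ^ 2) ^ (q / 2) :=
          rpow_add_le_add_rpow (by positivity) (by positivity) (by positivity) (by linarith)
      _ = ((a + b) / 2) ^ q + (3 * ρ) ^ (q / 2) * |(a - b) / 2| ^ q := by
          rw [mul_rpow (by positivity) (by positivity), ← sq_abs ((a - b) / 2),
            sq_rpow_div_two (by positivity), sq_rpow_div_two (abs_nonneg _)]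
      _ ≤ ‖x‖ ^ q + S ^ q * ‖y‖ ^ q + 3 * ρ * ‖y‖ ^ q := by gcongr
      _ = ‖x‖ ^ q + (S ^ q + 3 * ρ) * ‖y‖ ^ q := by ring
  calc (a ^ ρ + b ^ ρ) / 2 ≤ E ^ (ρ / 2) :=
        rpow_add_rpow_div_two_le hρ (norm_nonneg _) (norm_nonneg _)
    _ = (E ^ (q / 2)) ^ (ρ / q) := by rw [← rpow_mul (by positivity)]; field_simp
    _ ≤ _ := rpow_le_rpow (by positivity) hE (by positivity)

lemma isClosed_setOf_isSmoothConst (Y : Type*) [NormedAddCommGroup Y] {q : ℝ} (hq : 0 ≤ q) :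
    IsClosed {S : ℝ | IsSmoothConst Y q S} := by
  simp only [IsSmoothConst, Set.ofPred_and, Set.ofPred_forall]
  exact (isClosed_le continuous_const continuous_id).inter <| isClosed_iInter fun x =>
    isClosed_iInter fun y => isClosed_le continuous_const <|
      continuous_const.add ((continuous_rpow_const hq).mul continuous_const)

lemma isSmoothConst_smoothConst {Y : Type*} [NormedAddCommGroup Y] {q : ℝ} (hq : 0 ≤ q)
    (h : ∃ S, IsSmoothConst Y q S) : IsSmoothConst Y q (smoothConst Y q) :=
  (isClosed_setOf_isSmoothConst Y hq).csInf_mem h ⟨1, fun _ hS => hS.1⟩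

lemma sum_add_const_rpow_le {ι : Type*} [Fintype ι] {V : ι → ℝ} (hV : ∀ i, 0 ≤ V i)
    {C T β : ℝ} (hC : 0 ≤ C) (hT : 0 ≤ T) (hβ : 1 ≤ β)
    (h : ∑ i, V i ^ β ≤ Fintype.card ι * T ^ β) :
    ∑ i, (V i + C) ^ β ≤ Fintype.card ι * (T + C) ^ β := by
  have hβ0 : 0 < β := by linarith
  have hN : (0:ℝ) ≤ Fintype.card ι := Nat.cast_nonneg _
  have hroot {A : ℝ} (hA : 0 ≤ A) :
      (Fintype.card ι * A ^ β) ^ (1 / β) = (Fintype.card ι : ℝ) ^ (1 / β) * A := by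
    rw [mul_rpow hN (by positivity), ← rpow_mul hA, mul_one_div_cancel hβ0.ne', rpow_one]
  have hsum {W : ι → ℝ} (hW : ∀ i, 0 ≤ W i) : 0 ≤ ∑ i, W i ^ β :=
    sum_nonneg fun i _ => rpow_nonneg (hW i) β
  rw [← rpow_le_rpow_iff (hsum fun i => add_nonneg (hV i) hC) (by positivity)
    (one_div_pos.2 hβ0)]
  calc (∑ i, (V i + C) ^ β) ^ (1 / β)
      ≤ (∑ i, V i ^ β) ^ (1 / β) + (∑ _i : ι, C ^ β) ^ (1 / β) :=
        Lp_add_le_of_nonneg univ hβ (fun i _ => hV i) (fun _ _ => hC)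
    _ ≤ (Fintype.card ι : ℝ) ^ (1 / β) * T + (Fintype.card ι : ℝ) ^ (1 / β) * C := by
        rw [sum_const, card_univ, nsmul_eq_mul, hroot hC, ← hroot hT]
        gcongr
        exact hsum hV
    _ = (Fintype.card ι * (T + C) ^ β) ^ (1 / β) := by rw [hroot (by positivity)]; ring

lemma rpow_mean_le_rpow_mean {ι : Type*} [Fintype ι] [Nonempty ι] {z : ι → ℝ}
    (hz : ∀ i, 0 ≤ z i) {r ρ : ℝ} (hr : 0 < r) (hrρ : r ≤ ρ) :
    ((∑ i, z i ^ r) / Fintype.card ι) ^ (1 / r) ≤ ((∑ i, z i ^ ρ) / Fintype.card ι) ^ (1 / ρ) := by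
  have hN : (0 : ℝ) < Fintype.card ι := Nat.cast_pos.2 Fintype.card_pos
  have hmean : 0 ≤ (∑ i, z i ^ ρ) / Fintype.card ι :=
    div_nonneg (sum_nonneg fun i _ => rpow_nonneg (hz i) ρ) hN.le
  have h := arith_mean_le_rpow_mean univ (fun _ => (Fintype.card ι : ℝ)⁻¹) (fun i => z i ^ r)
    (fun _ _ => by positivity) (by simp [card_univ, hN.ne'])
    (fun i _ => rpow_nonneg (hz i) r) ((one_le_div hr).2 hrρ)
  simp only [← rpow_mul (hz _), mul_div_cancel₀ _ hr.ne', inv_mul_eq_div, ← sum_div] at h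
  calc ((∑ i, z i ^ r) / Fintype.card ι) ^ (1 / r)
      ≤ (((∑ i, z i ^ ρ) / Fintype.card ι) ^ (1 / (ρ / r))) ^ (1 / r) := by
        gcongr
        exact div_nonneg (sum_nonneg fun i _ => rpow_nonneg (hz i) r) hN.le
    _ = ((∑ i, z i ^ ρ) / Fintype.card ι) ^ (1 / ρ) := by
        rw [← rpow_mul hmean]; congr 1; field_simp

lemma ZMod.sum_univ_two {M : Type*} [AddCommMonoid M] (F : ZMod 2 → M) :
    ∑ a, F a = F 0 + F 1 :=
  Fin.sum_univ_two F

lemma ZMod.abs_val_sub_rpow_add_abs_val_sub_add_one_rpow {p : ℝ} (hp : 0 < p) (a b : ZMod 2) :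
    |(a.val : ℝ) - b.val| ^ p + |(a.val : ℝ) - (b + 1).val| ^ p = 1 := by
  have h01 : ∀ c : ZMod 2, c = 0 ∨ c = 1 := by decide
  rcases h01 a with rfl | rfl <;> rcases h01 b with rfl | rfl <;>
    simp only [zero_add, show (1 + 1 : ZMod 2) = 0 from rfl] <;>
    norm_num [zero_rpow hp.ne', ZMod.val_one]

lemma Fin.sum_pi_succ {α M : Type*} [Fintype α] [AddCommMonoid M] {m : ℕ}
    (F : (Fin (m + 1) → α) → M) : ∑ x, F x = ∑ x' : Fin m → α, ∑ a, F (Fin.cons a x') := by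
  rw [← (Fin.consEquiv fun _ => α).sum_comp, Fintype.sum_prod_type, sum_comm]
  rfl

lemma Fin.cons_add_single_zero {α : Type*} [AddMonoid α] {m : ℕ} (a b : α) (x : Fin m → α) :
    (Fin.cons a x : Fin (m + 1) → α) + Pi.single 0 b = Fin.cons (a + b) x := by
  ext j; refine Fin.cases ?_ (fun i => ?_) j <;> simp

lemma Fin.cons_add_single_succ {α : Type*} [AddMonoid α] {m : ℕ} (a b : α) (x : Fin m → α)
    (i : Fin m) :
    (Fin.cons a x : Fin (m + 1) → α) + Pi.single i.succ b = Fin.cons a (x + Pi.single i b) := by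
  ext j; refine Fin.cases ?_ (fun k => ?_) j <;> simp [Pi.single_apply]

lemma Fin.sum_sum_pi_succ_zmod_two {M : Type*} [AddCommMonoid M] {m : ℕ}
    (F : (Fin (m + 1) → ZMod 2) → (Fin (m + 1) → ZMod 2) → M) :
    ∑ x, ∑ y, F x y = ∑ x', ∑ y',
      ((F (Fin.cons 0 x') (Fin.cons 0 y') + F (Fin.cons 0 x') (Fin.cons 1 y'))
        + (F (Fin.cons 1 x') (Fin.cons 0 y') + F (Fin.cons 1 x') (Fin.cons 1 y'))) := by
  simp only [Fin.sum_pi_succ (α := ZMod 2)]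
  refine sum_congr rfl fun x' _ => ?_
  rw [sum_comm]
  simp only [ZMod.sum_univ_two]

lemma card_cube_prod (m : ℕ) :
    (Fintype.card ((Fin m → ZMod 2) × (Fin m → ZMod 2)) : ℝ) = 4 ^ m := by
  simp [Fintype.card_prod, ← mul_pow]

section Cube

variable {Y : Type*} [NormedAddCommGroup Y] [NormedSpace ℝ Y] {q ρ K L : ℝ}

lemma sum_four_norm_sub_rpow_le
    (hK : ∀ x y : Y, (‖x + y‖ ^ ρ + ‖x - y‖ ^ ρ) / 2 ≤ (‖x‖ ^ q + K * ‖y‖ ^ q) ^ (ρ / q))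
    (hq : 0 < q) (hρ : 0 ≤ ρ) (hK0 : 0 ≤ K) {a₀ a₁ b₀ b₁ : Y}
    (ha : ‖a₀ - a₁‖ ≤ L) (hb : ‖b₀ - b₁‖ ≤ L) :
    ‖a₀ - b₀‖ ^ ρ + ‖a₀ - b₁‖ ^ ρ + (‖a₁ - b₀‖ ^ ρ + ‖a₁ - b₁‖ ^ ρ) ≤
      4 * (‖midpoint ℝ a₀ a₁ - midpoint ℝ b₀ b₁‖ ^ q + K * L ^ q) ^ (ρ / q) := by
  set X := midpoint ℝ a₀ a₁ - midpoint ℝ b₀ b₁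
  have hpair (y : Y) (hy : ‖y‖ ≤ L) :
      ‖X + y‖ ^ ρ + ‖X - y‖ ^ ρ ≤ 2 * (‖X‖ ^ q + K * L ^ q) ^ (ρ / q) := by
    have : (‖X‖ ^ q + K * ‖y‖ ^ q) ^ (ρ / q) ≤ (‖X‖ ^ q + K * L ^ q) ^ (ρ / q) := by gcongr
    linarith [hK X y]
  have hhalf (y : Y) (hy : ‖y‖ ≤ L + L) : ‖(2⁻¹ : ℝ) • y‖ ≤ L := by
    rw [norm_smul, norm_inv, Real.norm_two]; linarith
  set y₁ := (2⁻¹ : ℝ) • ((a₀ - a₁) + (b₀ - b₁))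
  set y₂ := (2⁻¹ : ℝ) • ((a₀ - a₁) - (b₀ - b₁))
  have h₁ := hpair y₁ (hhalf _ ((norm_add_le _ _).trans (add_le_add ha hb)))
  have h₂ := hpair y₂ (hhalf _ ((norm_sub_le _ _).trans (add_le_add ha hb)))
  have e₁ : X + y₁ = a₀ - b₁ := by simp only [X, y₁, midpoint_eq_smul_add, invOf_eq_inv]; module
  have e₂ : X - y₁ = a₁ - b₀ := by simp only [X, y₁, midpoint_eq_smul_add, invOf_eq_inv]; module
  have e₃ : X + y₂ = a₀ - b₀ := by simp only [X, y₂, midpoint_eq_smul_add, invOf_eq_inv]; module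
  have e₄ : X - y₂ = a₁ - b₁ := by simp only [X, y₂, midpoint_eq_smul_add, invOf_eq_inv]; module
  rw [e₁, e₂] at h₁
  rw [e₃, e₄] at h₂
  linarith

lemma sum_sum_norm_sub_rpow_le_of_edge_le
    (hK : ∀ x y : Y, (‖x + y‖ ^ ρ + ‖x - y‖ ^ ρ) / 2 ≤ (‖x‖ ^ q + K * ‖y‖ ^ q) ^ (ρ / q))
    (hq : 0 < q) (hqρ : q ≤ ρ) (hK0 : 0 ≤ K) (hL : 0 ≤ L) {m : ℕ}
    (f : (Fin m → ZMod 2) → Y) (hf : ∀ x i, ‖f x - f (x + Pi.single i 1)‖ ≤ L) :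
    ∑ x, ∑ y, ‖f x - f y‖ ^ ρ ≤ 4 ^ m * (K * m * L ^ q) ^ (ρ / q) := by
  have hρ : 0 < ρ := hq.trans_le hqρ
  induction m with
  | zero => simp [zero_rpow hρ.ne', rpow_nonneg le_rfl]
  | succ m ih =>
    set g : (Fin m → ZMod 2) → Y := fun x' => midpoint ℝ (f (Fin.cons 0 x')) (f (Fin.cons 1 x'))
    have hvert (x' : Fin m → ZMod 2) : ‖f (Fin.cons 0 x') - f (Fin.cons 1 x')‖ ≤ L := by
      simpa [Fin.cons_add_single_zero] using hf (Fin.cons 0 x') 0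
    have hhor (a : ZMod 2) (x' : Fin m → ZMod 2) (i : Fin m) :
        ‖f (Fin.cons a x') - f (Fin.cons a (x' + Pi.single i 1))‖ ≤ L := by
      simpa [Fin.cons_add_single_succ] using hf (Fin.cons a x') i.succ
    have hg (x' : Fin m → ZMod 2) (i : Fin m) : ‖g x' - g (x' + Pi.single i 1)‖ ≤ L := by
      rw [← dist_eq_norm]
      refine (dist_midpoint_midpoint_le _ _ _ _).trans ?_
      rw [dist_eq_norm, dist_eq_norm]
      linarith [hhor 0 x' i, hhor 1 x' i]
    have hIH : ∑ P : (Fin m → ZMod 2) × (Fin m → ZMod 2), (‖g P.1 - g P.2‖ ^ q) ^ (ρ / q)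
        ≤ Fintype.card ((Fin m → ZMod 2) × (Fin m → ZMod 2)) * (K * m * L ^ q) ^ (ρ / q) := by
      simp only [← rpow_mul (norm_nonneg _), mul_div_cancel₀ _ hq.ne', Fintype.sum_prod_type,
        card_cube_prod]
      exact ih g hg
    rw [Fin.sum_sum_pi_succ_zmod_two fun x y => ‖f x - f y‖ ^ ρ]
    calc _ ≤ ∑ P : (Fin m → ZMod 2) × (Fin m → ZMod 2),
            4 * (‖g P.1 - g P.2‖ ^ q + K * L ^ q) ^ (ρ / q) := by
          rw [Fintype.sum_prod_type]
          gcongr with x' _ y' _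
          exact sum_four_norm_sub_rpow_le hK hq hρ.le hK0 (hvert x') (hvert y')
      _ ≤ 4 * (4 ^ m * (K * m * L ^ q + K * L ^ q) ^ (ρ / q)) := by
          rw [← mul_sum, ← card_cube_prod]
          gcongr
          exact sum_add_const_rpow_le (fun P => by positivity) (by positivity) (by positivity)
            ((one_le_div hq).2 hqρ) hIH
      _ = 4 ^ (m + 1) * (K * ↑(m + 1) * L ^ q) ^ (ρ / q) := by push_cast; ring_nf

end Cube

lemma IsSmoothConst.rpow_mean_norm_sub_le_of_edge_le {Y : Type*} [NormedAddCommGroup Y]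
    [NormedSpace ℝ Y] {q S r L : ℝ} (hS : IsSmoothConst Y q S) (hq1 : 1 ≤ q) (hq2 : q ≤ 2)
    (hr : 1 ≤ r) (hL : 0 ≤ L) {m : ℕ} (f : (Fin m → ZMod 2) → Y)
    (hf : ∀ x i, ‖f x - f (x + Pi.single i 1)‖ ≤ L) :
    ((∑ x, ∑ y, ‖f x - f y‖ ^ r) / 4 ^ m) ^ (1 / r) ≤ 6 * (r ^ (1 / q) + S) * m ^ (1 / q) * L := by
  have hq0 : 0 < q := by linarith
  set ρ := max r 2
  have hρ2 : 2 ≤ ρ := le_max_right r 2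
  set K := S ^ q + 3 * ρ
  have hSq : 0 ≤ S ^ q := rpow_nonneg (by linarith [hS.1]) q
  have hK0 : 0 ≤ K := by positivity
  have hcube := sum_sum_norm_sub_rpow_le_of_edge_le
    (fun x y => hS.norm_add_rpow_add_norm_sub_rpow_le hq1 hq2 hρ2 x y) hq0 (by linarith) hK0 hL f hf
  have hK : K ^ (1 / q) ≤ 6 * (r ^ (1 / q) + S) := by
    have h6 : (6 : ℝ) ^ (1 / q) ≤ 6 :=
      rpow_le_self_of_one_le (by norm_num) ((div_le_one hq0).2 hq1)
    calc K ^ (1 / q) ≤ (S ^ q + 6 * r) ^ (1 / q) := by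
          gcongr; linarith [max_le (by linarith : r ≤ 2 * r) (by linarith : (2:ℝ) ≤ 2 * r)]
      _ ≤ (S ^ q) ^ (1 / q) + (6 * r) ^ (1 / q) :=
          rpow_add_le_add_rpow hSq (by linarith) (by positivity) ((div_le_one hq0).2 hq1)
      _ = S + 6 ^ (1 / q) * r ^ (1 / q) := by
          rw [← rpow_mul (by linarith [hS.1]), mul_one_div_cancel hq0.ne', rpow_one,
            mul_rpow (by norm_num) (by linarith)]
      _ ≤ 6 * (r ^ (1 / q) + S) := by
          nlinarith [rpow_nonneg (by linarith : (0:ℝ) ≤ r) (1 / q), hS.1]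
  calc ((∑ x, ∑ y, ‖f x - f y‖ ^ r) / 4 ^ m) ^ (1 / r)
      ≤ ((∑ x, ∑ y, ‖f x - f y‖ ^ ρ) / 4 ^ m) ^ (1 / ρ) := by
        have := rpow_mean_le_rpow_mean (z := fun P : (Fin m → ZMod 2) × (Fin m → ZMod 2) =>
          ‖f P.1 - f P.2‖) (fun _ => norm_nonneg _) (by linarith) (le_max_left r 2)
        rwa [Fintype.sum_prod_type, Fintype.sum_prod_type, card_cube_prod] at this
    _ ≤ ((K * m * L ^ q) ^ (ρ / q)) ^ (1 / ρ) := by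
        gcongr
        rw [div_le_iff₀ (by positivity)]; linarith
    _ = K ^ (1 / q) * m ^ (1 / q) * L := by
        rw [← rpow_mul (by positivity), show ρ / q * (1 / ρ) = 1 / q by field_simp,
          mul_rpow (by positivity) (by positivity), mul_rpow hK0 (by positivity), ← rpow_mul hL,
          mul_one_div_cancel hq0.ne', rpow_one]
    _ ≤ 6 * (r ^ (1 / q) + S) * m ^ (1 / q) * L := by gcongr

lemma le_sum_sum_lp_rpow {m : ℕ} {p β : ℝ} (hp : 0 < p) (hβ : 0 ≤ β) :
    4 ^ m * ((m : ℝ) / 2) ^ β / 2 ≤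
      ∑ x : Fin m → ZMod 2, ∑ y : Fin m → ZMod 2,
        (∑ i, |((x i).val : ℝ) - ((y i).val : ℝ)| ^ p) ^ β := by
  set d : (Fin m → ZMod 2) → (Fin m → ZMod 2) → ℝ :=
    fun x y => ∑ i, |((x i).val : ℝ) - ((y i).val : ℝ)| ^ p
  have hd0 (x y) : 0 ≤ d x y := sum_nonneg fun i _ => by positivity
  have hanti (x y) : d x y + d x (y + 1) = m := by
    simp only [d, ← sum_add_distrib, Pi.add_apply, Pi.one_apply,
      ZMod.abs_val_sub_rpow_add_abs_val_sub_add_one_rpow hp]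
    simp
  have hpair (x y) : ((m : ℝ) / 2) ^ β ≤ d x y ^ β + d x (y + 1) ^ β := by
    rcases le_total ((m : ℝ) / 2) (d x y) with h | h
    · linarith [rpow_le_rpow (by positivity) h hβ, rpow_nonneg (hd0 x (y + 1)) β]
    · have h' : (m : ℝ) / 2 ≤ d x (y + 1) := by linarith [hanti x y]
      linarith [rpow_le_rpow (by positivity) h' hβ, rpow_nonneg (hd0 x y) β]
  have hshift (x) : ∑ y, d x (y + 1) ^ β = ∑ y, d x y ^ β :=
    Fintype.sum_equiv (Equiv.addRight 1) _ _ fun _ => rfl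
  calc 4 ^ m * ((m : ℝ) / 2) ^ β / 2
      = (∑ _x : Fin m → ZMod 2, ∑ _y : Fin m → ZMod 2, ((m : ℝ) / 2) ^ β) / 2 := by
        simp [show (4:ℝ) = 2 * 2 by norm_num, mul_pow]; ring
    _ ≤ (∑ x, ∑ y, (d x y ^ β + d x (y + 1) ^ β)) / 2 := by gcongr with x _ y _; exact hpair x y
    _ = ∑ x, ∑ y, d x y ^ β := by simp only [sum_add_distrib, hshift]; ring

lemma rpow_div_four_le_lp_mean {m : ℕ} {p s : ℝ} (hp : 1 ≤ p) (hs : 1 ≤ s) :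
    (m : ℝ) ^ (1 / p) / 4 ≤
      ((∑ x : Fin m → ZMod 2, ∑ y : Fin m → ZMod 2,
          (∑ i, |((x i).val : ℝ) - ((y i).val : ℝ)| ^ p) ^ (s / p)) / 4 ^ m) ^ (1 / s) := by
  have hp0 : 0 < p := by linarith
  have hs0 : 0 < s := by linarith
  have hm : (0 : ℝ) ≤ m := Nat.cast_nonneg m
  have htwo : (2 : ℝ) ^ (s / p) * 2 ≤ 4 ^ s := by
    have h1 : (2 : ℝ) ^ (s / p) ≤ 2 ^ s :=
      rpow_le_rpow_of_exponent_le one_le_two (div_le_self hs0.le hp)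
    have h2 : (2 : ℝ) ≤ 2 ^ s := by simpa using rpow_le_rpow_of_exponent_le one_le_two hs
    calc (2 : ℝ) ^ (s / p) * 2 ≤ 2 ^ s * 2 ^ s := by gcongr
      _ = 4 ^ s := by rw [← mul_rpow zero_le_two zero_le_two]; norm_num
  have hpow : ((m : ℝ) ^ (1 / p) / 4) ^ s ≤ ((m : ℝ) / 2) ^ (s / p) / 2 := by
    rw [div_rpow (by positivity) (by norm_num), ← rpow_mul hm, div_rpow hm zero_le_two, div_div,
      one_div_mul_eq_div]
    gcongr
  rw [one_div s, le_rpow_inv_iff_of_pos (by positivity) (by positivity) hs0,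
    le_div_iff₀ (by positivity)]
  calc ((m : ℝ) ^ (1 / p) / 4) ^ s * 4 ^ m ≤ 4 ^ m * ((m : ℝ) / 2) ^ (s / p) / 2 := by
        rw [mul_div_assoc, mul_comm]; gcongr
    _ ≤ _ := le_sum_sum_lp_rpow hp0 (by positivity)

/-- **Lemma (uniformly smooth targets force large edges of the cube).**
There is a universal constant `c ∈ (0,∞)` with the following property.  Let `p ∈ [1,2)`,
`q ∈ (p,2]`, `r, s ∈ [1,∞)`.  Let `Y` be a Banach space with `S_q(Y) < ∞`, and suppose
`f : 𝔽₂^m → Y` satisfies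
`((1/4^m)∑_{x,y}‖f(x)-f(y)‖^r)^{1/r} = ((1/4^m)∑_{x,y}‖x-y‖_{ℓ_p}^s)^{1/s}`,
where `𝔽₂^m` is identified with `{0,1}^m ⊂ ℝ^m`.  Then there are `x ∈ 𝔽₂^m` and
`i ∈ {1,…,m}` with `‖f(x)-f(x+eᵢ)‖ ≥ c·m^{1/p-1/q}/(r^{1/q}+S_q(Y))`. -/
theorem smooth_target_large_edge :
    ∃ c : ℝ, 0 < c ∧
      ∀ (p q r s : ℝ), 1 ≤ p → p < 2 → p < q → q ≤ 2 → 1 ≤ r → 1 ≤ s →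
      ∀ (Y : Type*) [NormedAddCommGroup Y] [NormedSpace ℝ Y] [CompleteSpace Y],
        (∃ S : ℝ, IsSmoothConst Y q S) →
        ∀ (m : ℕ), 0 < m →
        ∀ f : (Fin m → ZMod 2) → Y,
          ((∑ x : Fin m → ZMod 2, ∑ y : Fin m → ZMod 2, ‖f x - f y‖ ^ r) / 4 ^ m) ^ (1 / r)
            = ((∑ x : Fin m → ZMod 2, ∑ y : Fin m → ZMod 2,
                (∑ i, |((x i).val : ℝ) - ((y i).val : ℝ)| ^ p) ^ (s / p)) / 4 ^ m) ^ (1 / s) →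
          ∃ (x : Fin m → ZMod 2) (i : Fin m),
            c * (m : ℝ) ^ (1 / p - 1 / q) / (r ^ (1 / q) + smoothConst Y q) ≤
              ‖f x - f (fun j => x j + if j = i then 1 else 0)‖ := by
  refine ⟨1 / 24, by norm_num, ?_⟩
  intro p q r s hp1 _ hpq hq2 hr1 hs1 Y _ _ _ hex m hm f heq
  have hq1 : 1 ≤ q := by linarith
  have hS := isSmoothConst_smoothConst (by linarith) hex
  have : Nonempty (Fin m) := ⟨⟨0, hm⟩⟩
  obtain ⟨⟨x, i⟩, -, hmax⟩ := exists_max_image univ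
    (fun P : (Fin m → ZMod 2) × Fin m => ‖f P.1 - f (P.1 + Pi.single P.2 1)‖) univ_nonempty
  refine ⟨x, i, ?_⟩
  have hedge : (fun j => x j + if j = i then 1 else 0) = x + Pi.single i 1 := by
    funext j; simp [Pi.single_apply]
  set L := ‖f x - f (x + Pi.single i 1)‖
  have hupper := hS.rpow_mean_norm_sub_le_of_edge_le hq1 hq2 hr1 (norm_nonneg _) f
    fun y j => hmax (y, j) (mem_univ _)
  have hlower := rpow_div_four_le_lp_mean (m := m) hp1 hs1
  rw [← heq] at hlower
  have hm0 : (0 : ℝ) < m := Nat.cast_pos.2 hm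
  have hB : 0 < r ^ (1 / q) + smoothConst Y q := add_pos (by positivity) (by linarith [hS.1])
  rw [hedge, rpow_sub hm0, div_le_iff₀ hB, mul_div_assoc', div_le_iff₀ (by positivity)]
  linarith
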